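/- Let G be a graph on n vertices with n ≥ 2 and number of edges e(G). Then the signless Laplacian spectral radius satisfies q(G) ≤ 2e(G)/(n−1) + n − 2. -/

import Mathlib

/-!
Let `x` be an eigenvector of `Q(G)` for `μ > 0` and `v` a vertex maximizing `|x u| / d_u`. Then
`|x u| ≤ (|x v| / d_v) d_u` for every `u`, and the eigen-equation at `v` gives
`μ ≤ d_v + (∑_{u ∼ v} d_u) / d_v`: this is the maximal row sum of `D⁻¹ Q D`.

Das's bound on `d_v + (∑_{u ∼ v} d_u) / d_v` comes from three estimates of `S = ∑_{u ∼ v} d_u`: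
`S + d_v ≤ 2e`, `S ≤ d_v (n - 1)` and `2S ≤ 2e + d_v (d_v - 1)` (the last because an edge is
counted twice in `S` only if both ends lie in `N(v)`), together with the integrality of `d_v`
in the form `(n - 1 - d_v)(n - 2 - d_v) ≥ 0`.
-/

open SimpleGraph Finset

attribute [local instance] Classical.propDecidable

noncomputable def signlessLaplacian {V : Type*} [Fintype V] [DecidableEq V] (G : SimpleGraph V) : Matrix V V ℝ :=
  Matrix.diagonal (fun v => (G.degree v : ℝ)) + G.adjMatrix ℝ

/-- The signless Laplacian spectral radius: the largest (real) eigenvalue of Q(G). -/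
noncomputable def qspec {V : Type*} [Fintype V] [DecidableEq V] (G : SimpleGraph V) : ℝ :=
  sSup {μ : ℝ | ∃ x : V → ℝ, x ≠ 0 ∧ (signlessLaplacian G).mulVec x = μ • x}

/-- `S_{n,t}`: the join of a clique on the first `t` vertices with an independent set. -/
def Snt (n t : ℕ) : SimpleGraph (Fin n) :=
  SimpleGraph.fromRel (fun i j => (i : ℕ) < t ∨ (j : ℕ) < t)

/-- `G` contains a copy of `H` as a subgraph. -/
def Contains {W V : Type*} (H : SimpleGraph W) (G : SimpleGraph V) : Prop :=
  ∃ f : H →g G, Function.Injective f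

/-- `G` contains vertex-disjoint paths on `2 * a i` vertices, for `i : Fin k`. -/
def ContainsDisjPaths {V : Type*} (G : SimpleGraph V) {k : ℕ} (a : Fin k → ℕ) : Prop :=
  ∃ f : ∀ i : Fin k, Fin (2 * a i) → V,
    (∀ i, Function.Injective (f i)) ∧
    (∀ i j, i ≠ j → ∀ x y, f i x ≠ f j y) ∧
    (∀ i x y, (SimpleGraph.pathGraph (2 * a i)).Adj x y → G.Adj (f i x) (f i y))

theorem sub_one_mul_mul_self_add_le {n d S m : ℝ} (hd : 1 ≤ d) (hdn : d ≤ n - 1)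
    (hint : 0 ≤ (n - 1 - d) * (n - 2 - d)) (hA : S + d ≤ 2 * m) (hB : S + d ≤ d * n)
    (hC : 2 * S + d ≤ 2 * m + d * d) :
    (n - 1) * (d * d + S) ≤ 2 * m * d + (n - 2) * (n - 1) * d := by
  have hd0 : 0 ≤ d := by linarith
  have hcube := mul_nonneg hd0 hint
  -- After bounding `2m` below by `max (S + d) (2S + d - d²)`, the target is piecewise linear in `S`.
  rcases le_total S (d * d) with hS | hS
  · linarith [mul_nonneg (sub_nonneg.2 hdn) (sub_nonneg.2 hS),
      mul_nonneg hd0 (sub_nonneg.2 hA)]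
  rcases le_total (n - 1) (2 * d) with hn | hn
  · linarith [mul_nonneg hd0 (sub_nonneg.2 hC),
      mul_nonneg (sub_nonneg.2 hn) (sub_nonneg.2 hS)]
  · linarith [mul_nonneg hd0 (sub_nonneg.2 hC),
      mul_nonneg (sub_nonneg.2 hn) (sub_nonneg.2 hB),
      mul_nonneg (mul_nonneg hd0 (sub_nonneg.2 hd)) (sub_nonneg.2 hdn)]

namespace SimpleGraph

variable {V : Type*} [Fintype V] (G : SimpleGraph V)

theorem two_mul_sum_degree_add_card_le (s : Finset V) :
    2 * ∑ u ∈ s, G.degree u + #s ≤ 2 * #G.edgeFinset + #s * #s := by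
  have hsplit (u : V) :
      #{w ∈ G.neighborFinset u | w ∈ s} + #{w ∈ G.neighborFinset u | w ∉ s} = G.degree u := by
    rw [card_filter_add_card_filter_not, card_neighborFinset_eq_degree]
  have hinside (u : V) (hu : u ∈ s) : #{w ∈ G.neighborFinset u | w ∈ s} + 1 ≤ #s := by
    rw [← card_erase_add_one hu]
    refine Nat.add_le_add_right (card_le_card fun w hw => ?_) 1
    simp only [mem_filter, mem_neighborFinset] at hw
    exact mem_erase.2 ⟨hw.1.ne', hw.2⟩
  have hcross : ∑ u ∈ s, #{w ∈ G.neighborFinset u | w ∉ s} ≤ ∑ w ∈ sᶜ, G.degree w := by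
    calc ∑ u ∈ s, #{w ∈ G.neighborFinset u | w ∉ s}
        = ∑ u ∈ s, #(sᶜ.bipartiteAbove G.Adj u) := by
          refine sum_congr rfl fun u _ => congrArg card (ext fun w => ?_)
          simp [bipartiteAbove, and_comm]
      _ = ∑ w ∈ sᶜ, #(s.bipartiteBelow G.Adj w) :=
          sum_card_bipartiteAbove_eq_sum_card_bipartiteBelow _
      _ ≤ ∑ w ∈ sᶜ, G.degree w := by
          refine sum_le_sum fun w _ => ?_
          rw [← card_neighborFinset_eq_degree]
          exact card_le_card fun u hu => by
            simpa [bipartiteBelow, G.adj_comm] using (mem_filter.1 hu).2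
  have htotal : ∑ u ∈ s, G.degree u + ∑ w ∈ sᶜ, G.degree w = 2 * #G.edgeFinset := by
    rw [sum_add_sum_compl, sum_degrees_eq_twice_card_edges]
  have hdeg : ∑ u ∈ s, G.degree u = ∑ u ∈ s, #{w ∈ G.neighborFinset u | w ∈ s}
      + ∑ u ∈ s, #{w ∈ G.neighborFinset u | w ∉ s} := by
    simp only [← sum_add_distrib, hsplit]
  have hin : ∑ u ∈ s, (#{w ∈ G.neighborFinset u | w ∈ s} + 1) ≤ #s * #s := by
    simpa using sum_le_sum hinside
  rw [sum_add_distrib, sum_const, smul_eq_mul, mul_one] at hin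
  omega

noncomputable def neighborDegreeSum (v : V) : ℕ := ∑ u ∈ G.neighborFinset v, G.degree u

theorem neighborDegreeSum_add_degree_le (v : V) :
    G.neighborDegreeSum v + G.degree v ≤ 2 * #G.edgeFinset := by
  have h := sum_insert (f := fun u => G.degree u) (G.notMem_neighborFinset_self v)
  rw [← sum_degrees_eq_twice_card_edges, neighborDegreeSum, add_comm, ← h]
  exact sum_le_univ_sum_of_nonneg fun _ => Nat.zero_le _

theorem neighborDegreeSum_add_degree_le_degree_mul_card (v : V) :
    G.neighborDegreeSum v + G.degree v ≤ G.degree v * Fintype.card V := by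
  have h : G.neighborDegreeSum v ≤ G.degree v * (Fintype.card V - 1) := by
    simpa [neighborDegreeSum, card_neighborFinset_eq_degree] using
      sum_le_card_nsmul (G.neighborFinset v) (fun u => G.degree u) (Fintype.card V - 1)
        fun u _ => Nat.le_sub_one_of_lt (G.degree_lt_card_verts u)
  have hV : 1 ≤ Fintype.card V := Fintype.card_pos_iff.2 ⟨v⟩
  calc G.neighborDegreeSum v + G.degree v
      ≤ G.degree v * (Fintype.card V - 1) + G.degree v := Nat.add_le_add_right h _
    _ = G.degree v * Fintype.card V := by rw [← Nat.mul_add_one, Nat.sub_add_cancel hV]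

theorem two_mul_neighborDegreeSum_add_degree_le (v : V) :
    2 * G.neighborDegreeSum v + G.degree v ≤ 2 * #G.edgeFinset + G.degree v * G.degree v := by
  simpa [neighborDegreeSum, card_neighborFinset_eq_degree] using
    G.two_mul_sum_degree_add_card_le (G.neighborFinset v)

theorem degree_add_neighborDegreeSum_div_le {v : V} (hv : 0 < G.degree v) :
    (G.degree v : ℝ) + G.neighborDegreeSum v / G.degree v ≤
      2 * #G.edgeFinset / ((Fintype.card V : ℝ) - 1) + ((Fintype.card V : ℝ) - 2) := by
  set d := G.degree v
  set n := Fintype.card V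
  set S := G.neighborDegreeSum v
  set m := #G.edgeFinset
  have hdn : d + 1 ≤ n := G.degree_lt_card_verts v
  have hdR : (1 : ℝ) ≤ d := by exact_mod_cast hv
  have hdnR : (d : ℝ) + 1 ≤ n := by exact_mod_cast hdn
  have hint : (0 : ℝ) ≤ (n - 1 - d) * (n - 2 - d) := by
    rcases hdn.eq_or_lt with h | h
    · have h' : (d : ℝ) + 1 = n := by exact_mod_cast h
      rw [show (n : ℝ) - 1 - d = 0 by linarith, zero_mul]
    · have h' : (d : ℝ) + 2 ≤ n := by exact_mod_cast h
      exact mul_nonneg (by linarith) (by linarith)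
  have hA : (S : ℝ) + d ≤ 2 * m := by exact_mod_cast G.neighborDegreeSum_add_degree_le v
  have hB : (S : ℝ) + d ≤ d * n := by
    exact_mod_cast G.neighborDegreeSum_add_degree_le_degree_mul_card v
  have hC : 2 * (S : ℝ) + d ≤ 2 * m + d * d := by
    exact_mod_cast G.two_mul_neighborDegreeSum_add_degree_le v
  have key := sub_one_mul_mul_self_add_le hdR (by linarith) hint hA hB hC
  have hd0 : (0 : ℝ) < d := by linarith
  have hn1 : (0 : ℝ) < n - 1 := by linarith
  calc (d : ℝ) + S / d = (d * d + S) / d := by field_simp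
    _ ≤ (2 * m + (n - 2) * (n - 1)) / (n - 1) := by
        rw [div_le_div_iff₀ hd0 hn1]; linarith
    _ = 2 * m / (n - 1) + (n - 2) := by field_simp

end SimpleGraph

section SignlessLaplacian

variable {V : Type*} [Fintype V] [DecidableEq V] {G : SimpleGraph V}

theorem signlessLaplacian_mulVec_apply (x : V → ℝ) (v : V) :
    (signlessLaplacian G).mulVec x v = G.degree v * x v + ∑ u ∈ G.neighborFinset v, x u := by
  simp [signlessLaplacian, Matrix.add_mulVec, Matrix.mulVec_diagonal]

variable {μ : ℝ} {x : V → ℝ}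

theorem eigenvector_apply_eq_zero_of_degree_eq_zero (hμ : μ ≠ 0)
    (hx : (signlessLaplacian G).mulVec x = μ • x) {v : V} (hv : G.degree v = 0) : x v = 0 := by
  have h := congrFun hx v
  rw [signlessLaplacian_mulVec_apply, hv,
    card_eq_zero.1 ((G.card_neighborFinset_eq_degree v).trans hv)] at h
  simpa [hμ, eq_comm] using h

theorem exists_le_degree_add_neighborDegreeSum_div (hμ : 0 < μ) (hx0 : x ≠ 0)
    (hx : (signlessLaplacian G).mulVec x = μ • x) :
    ∃ v, 0 < G.degree v ∧ μ ≤ G.degree v + G.neighborDegreeSum v / G.degree v := by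
  set ratio : V → ℝ := fun u => |x u| / G.degree u
  obtain ⟨w, hw⟩ := Function.ne_iff.1 hx0
  obtain ⟨v, -, hv⟩ := exists_max_image univ ratio ⟨w, mem_univ w⟩
  have hratio_pos : 0 < ratio v := by
    refine lt_of_lt_of_le (div_pos (abs_pos.2 hw) ?_) (hv w (mem_univ w))
    exact Nat.cast_pos.2 (Nat.pos_of_ne_zero
      fun h => hw (eigenvector_apply_eq_zero_of_degree_eq_zero hμ.ne' hx h))
  have hdv : 0 < G.degree v := Nat.pos_of_ne_zero fun h => by simp [ratio, h] at hratio_pos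
  have hdvR : (0 : ℝ) < G.degree v := Nat.cast_pos.2 hdv
  have hbound (u : V) : |x u| ≤ ratio v * G.degree u := by
    rcases (G.degree u).eq_zero_or_pos with hu | hu
    · rw [eigenvector_apply_eq_zero_of_degree_eq_zero hμ.ne' hx hu, abs_zero]
      exact mul_nonneg hratio_pos.le (Nat.cast_nonneg _)
    · rw [← div_le_iff₀ (Nat.cast_pos.2 hu)]
      exact hv u (mem_univ u)
  have hxv : |x v| = ratio v * G.degree v := (div_mul_cancel₀ _ hdvR.ne').symm
  have hrow : μ * |x v| ≤ G.degree v * |x v| + ratio v * G.neighborDegreeSum v :=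
    calc μ * |x v| = |G.degree v * x v + ∑ u ∈ G.neighborFinset v, x u| := by
          rw [← signlessLaplacian_mulVec_apply, hx, Pi.smul_apply, smul_eq_mul, abs_mul,
            abs_of_pos hμ]
      _ ≤ G.degree v * |x v| + ∑ u ∈ G.neighborFinset v, |x u| :=
          (abs_add_le _ _).trans (add_le_add (by simp [abs_mul]) (abs_sum_le_sum_abs _ _))
      _ ≤ G.degree v * |x v| + ratio v * G.neighborDegreeSum v := by
          rw [neighborDegreeSum, Nat.cast_sum, mul_sum]
          exact add_le_add le_rfl (sum_le_sum fun u _ => hbound u)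
  refine ⟨v, hdv, ?_⟩
  rw [hxv] at hrow
  rw [add_div' _ _ _ hdvR.ne', le_div_iff₀ hdvR]
  nlinarith

end SignlessLaplacian

theorem das_bound {V : Type*} [Fintype V] [DecidableEq V] (G : SimpleGraph V)
    (hn : 2 ≤ Fintype.card V) :
    qspec G ≤ 2 * (G.edgeFinset.card : ℝ) / ((Fintype.card V : ℝ) - 1) +
      ((Fintype.card V : ℝ) - 2) := by
  have hnR : (2 : ℝ) ≤ Fintype.card V := by exact_mod_cast hn
  have hbound : 0 ≤ 2 * (G.edgeFinset.card : ℝ) / ((Fintype.card V : ℝ) - 1) +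
      ((Fintype.card V : ℝ) - 2) :=
    add_nonneg (div_nonneg (by positivity) (by linarith)) (by linarith)
  refine Real.sSup_le ?_ hbound
  rintro μ ⟨x, hx0, hx⟩
  rcases le_or_gt μ 0 with hμ | hμ
  · exact hμ.trans hbound
  obtain ⟨v, hv, hμv⟩ := exists_le_degree_add_neighborDegreeSum_div hμ hx0 hx
  exact hμv.trans (G.degree_add_neighborDegreeSum_div_le hv)
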